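/- arXiv:2301.00804 — 3 statements merged into one kernel-verified Lean document; each statement's English description precedes it below -/
import Mathlib

section
/- (LaSalle's nonlinear Grönwall inequality.) Let A, C > 0, let T₀ > 0, and let f : [0, T₀] → [0, ∞) be continuous and satisfy f(t) ≤ A + C ∫₀ᵗ f(s)² ds for all t ∈ [0, T₀]. Then for every t ∈ [0, min(T₀, 1/(2AC))) one has f(t) ≤ 1/(A⁻¹ − C t) ≤ 2A. -/
open MeasureTheory

/-- **LaSalle's nonlinear Grönwall inequality.**
If `f : [0, T₀] → [0, ∞)` is continuous and satisfies
`f t ≤ A + C ∫₀ᵗ f(s)² ds` on `[0, T₀]`, then for every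
`t ∈ [0, min(T₀, 1/(2AC)))` one has `f t ≤ 1/(A⁻¹ − C t) ≤ 2A`. -/
theorem lasalle_nonlinear_gronwall
    (A C T₀ : ℝ) (hA : 0 < A) (hC : 0 < C) (hT₀ : 0 < T₀)
    (f : ℝ → ℝ)
    (hcont : ContinuousOn f (Set.Icc 0 T₀))
    (hnonneg : ∀ t ∈ Set.Icc 0 T₀, 0 ≤ f t)
    (hineq : ∀ t ∈ Set.Icc 0 T₀, f t ≤ A + C * ∫ s in (0:ℝ)..t, (f s) ^ 2) :
    ∀ t : ℝ, 0 ≤ t → t < min T₀ (1 / (2 * A * C)) →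
      f t ≤ 1 / (A⁻¹ - C * t) ∧ 1 / (A⁻¹ - C * t) ≤ 2 * A := by
  intro t ht0 htlt
  have htT : t < T₀ := htlt.trans_le (min_le_left _ _)
  have htAC : t < 1 / (2 * A * C) := htlt.trans_le (min_le_right _ _)
  have hsub : Set.Icc (0:ℝ) t ⊆ Set.Icc 0 T₀ := Set.Icc_subset_Icc le_rfl htT.le
  -- t ∈ [0, T₀]
  have htmem : t ∈ Set.Icc (0:ℝ) T₀ := ⟨ht0, htT.le⟩
  -- continuity of f²
  have hf2cont : ContinuousOn (fun s => f s ^ 2) (Set.Icc 0 T₀) := by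
    exact (hcont.pow 2)
  -- definition of u
  set u : ℝ → ℝ := fun s => A + C * ∫ x in (0:ℝ)..s, f x ^ 2 with hu
  -- u ≥ A on [0, T₀] since f ≥ 0
  have hfint : ∀ s ∈ Set.Icc (0:ℝ) T₀, IntervalIntegrable (fun x => f x ^ 2) volume 0 s := by
    intro s hs
    apply ContinuousOn.intervalIntegrable
    apply hf2cont.mono
    rw [Set.uIcc_of_le hs.1]
    exact Set.Icc_subset_Icc le_rfl hs.2
  have huA : ∀ s ∈ Set.Icc (0:ℝ) T₀, A ≤ u s := by
    intro s hs
    have h1 : 0 ≤ ∫ x in (0:ℝ)..s, f x ^ 2 := by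
      apply intervalIntegral.integral_nonneg hs.1
      intro x _; positivity
    show A ≤ A + C * ∫ x in (0:ℝ)..s, f x ^ 2
    nlinarith
  have hupos : ∀ s ∈ Set.Icc (0:ℝ) T₀, 0 < u s := fun s hs => hA.trans_le (huA s hs)
  have hfu : ∀ s ∈ Set.Icc (0:ℝ) T₀, f s ≤ u s := fun s hs => hineq s hs
  -- u is continuous on [0, t]
  have hucont : ContinuousOn u (Set.Icc 0 t) := by
    apply continuousOn_const.add (continuousOn_const.mul ?_)
    have := intervalIntegral.continuousOn_primitive_interval
      (f := fun x => f x ^ 2) (a := 0) (b := t) (μ := volume) ?_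
    · simpa [Set.uIcc_of_le ht0] using this
    · rw [Set.uIcc_of_le ht0]
      exact (hf2cont.mono (Set.Icc_subset_Icc le_rfl htT.le)).integrableOn_Icc
  -- w = u⁻¹ + C·s is monotone on [0, t]
  set w : ℝ → ℝ := fun s => (u s)⁻¹ + C * s with hw
  have hwmono : MonotoneOn w (Set.Icc 0 t) := by
    apply monotoneOn_of_hasDerivWithinAt_nonneg (convex_Icc 0 t)
      (f' := fun s => -(C * f s ^ 2) / (u s) ^ 2 + C)
    · exact ((hucont.inv₀ (fun s hs => (hupos s (hsub hs)).ne')).add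
        (continuousOn_const.mul continuousOn_id))
    · intro x hx
      rw [interior_Icc] at hx ⊢
      have hxT : x ∈ Set.Icc (0:ℝ) T₀ := hsub ⟨hx.1.le, hx.2.le⟩
      have hxo : x ∈ Set.Ioo (0:ℝ) T₀ := ⟨hx.1, hx.2.trans htT⟩
      have hcx : ContinuousAt (fun s => f s ^ 2) x :=
        (hf2cont x hxT).continuousAt (Icc_mem_nhds hxo.1 hxo.2)
      have hmeas : StronglyMeasurableAtFilter (fun s => f s ^ 2) (nhds x) volume :=
        (hf2cont.mono Set.Ioo_subset_Icc_self).stronglyMeasurableAtFilter isOpen_Ioo _ hxo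
      have hF : HasDerivAt (fun s => ∫ x in (0:ℝ)..s, f x ^ 2) (f x ^ 2) x :=
        intervalIntegral.integral_hasDerivAt_right (hfint x hxT) hmeas hcx
      have hud : HasDerivAt u (C * f x ^ 2) x := by
        exact (hF.const_mul C).const_add A
      have : HasDerivAt w (-(C * f x ^ 2) / (u x) ^ 2 + C) x := by
        have h1 : HasDerivAt (fun s => (u s)⁻¹) (-(C * f x ^ 2) / (u x) ^ 2) x :=
          hud.inv (hupos x hxT).ne'
        have h3 := h1.add ((hasDerivAt_id x).const_mul C)
        simp only [mul_one] at h3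
        exact h3
      exact this.hasDerivWithinAt
    · intro x hx
      rw [interior_Icc] at hx
      have hxT : x ∈ Set.Icc (0:ℝ) T₀ := hsub ⟨hx.1.le, hx.2.le⟩
      have h1 : f x ≤ u x := hfu x hxT
      have h2 : 0 ≤ f x := hnonneg x hxT
      have h3 : 0 < u x := hupos x hxT
      have h4 : f x ^ 2 ≤ u x ^ 2 := by nlinarith
      have h5 : C * f x ^ 2 ≤ C * u x ^ 2 := by nlinarith
      rw [div_add' _ _ _ (by positivity), le_div_iff₀ (by positivity)]
      nlinarith
  -- apply monotonicity from 0 to t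
  have hkey : w 0 ≤ w t := hwmono (Set.left_mem_Icc.mpr ht0) (Set.right_mem_Icc.mpr ht0) ht0
  have hw0 : w 0 = A⁻¹ := by simp [hw, hu]
  have hdenom : (2 * A)⁻¹ < A⁻¹ - C * t := by
    have h1 : C * t < C * (1 / (2 * A * C)) := by
      rcases eq_or_lt_of_le ht0 with h | h
      · rw [← h]; simp; positivity
      · exact mul_lt_mul_of_pos_left htAC hC
    have h2 : C * (1 / (2 * A * C)) = (2 * A)⁻¹ := by field_simp
    have h3 : A⁻¹ = (2 * A)⁻¹ + (2 * A)⁻¹ := by field_simp; ring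
    rw [h3]; linarith [h1.trans_eq h2]
  have hdpos : 0 < A⁻¹ - C * t := lt_trans (by positivity) hdenom
  -- from hkey : A⁻¹ ≤ (u t)⁻¹ + C t
  have hut : A⁻¹ - C * t ≤ (u t)⁻¹ := by
    have := hkey; rw [hw0] at this; simp only [hw] at this; linarith
  have hutpos : 0 < u t := hupos t htmem
  have huble : u t ≤ 1 / (A⁻¹ - C * t) := by
    rw [le_div_iff₀ hdpos]
    calc u t * (A⁻¹ - C * t) ≤ u t * (u t)⁻¹ := by
          exact mul_le_mul_of_nonneg_left hut hutpos.le
      _ = 1 := mul_inv_cancel₀ hutpos.ne'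
  constructor
  · exact (hfu t htmem).trans huble
  · rw [div_le_iff₀ hdpos]
    have : (2 * A) * (2 * A)⁻¹ = 1 := mul_inv_cancel₀ (by positivity)
    nlinarith [hdenom, hA]
end

section
/- Let d ≥ 2, β ∈ (0,1), and let u ∈ C^{β}(𝕋^d; ℝ^d). Then for every ε ∈ (0,1], | ∫_{𝕋^d} ⟨ (u⊗u)*ψ_ε − (u*ψ_ε)⊗(u*ψ_ε), ∇(u*ψ_ε) ⟩ dx | ≤ C(d, β, ψ) · ε^{3β−1} · ‖u‖_{C^{β}}³, where ⟨·,·⟩ denotes the Frobenius inner product of matrices. -/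
open MeasureTheory

/-- Integer-periodicity: a function on `ℝ^d` that descends to the torus `𝕋^d = ℝ^d/ℤ^d`. -/
def ZPer {d : ℕ} {E : Type*} (f : (Fin d → ℝ) → E) : Prop :=
  ∀ (x : Fin d → ℝ) (k : Fin d → ℤ), f (x + fun i => (k i : ℝ)) = f x

/-- The fundamental domain `[0,1)^d` of the torus `𝕋^d = ℝ^d/ℤ^d`. -/
def cube (d : ℕ) : Set (Fin d → ℝ) := Set.univ.pi fun _ => Set.Ico (0 : ℝ) 1

/-- A standard mollifier: smooth, nonnegative, radial, supported in the unit
ball, with total integral `1`. -/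
structure IsMollifier {d : ℕ} (ψ : (Fin d → ℝ) → ℝ) : Prop where
  smooth : ContDiff ℝ (⊤ : ℕ∞) ψ
  nonneg : ∀ x, 0 ≤ ψ x
  radial : ∀ x y : Fin d → ℝ, (∑ i, x i ^ 2) = (∑ i, y i ^ 2) → ψ x = ψ y
  support_ball : ∀ x : Fin d → ℝ, 1 < ∑ i, x i ^ 2 → ψ x = 0
  integral_one : (∫ x, ψ x) = 1

/-- The rescaled mollifier `ψ_ε(x) = ε^{−d} ψ(x/ε)`. -/
noncomputable def scaledMollifier {d : ℕ} (ψ : (Fin d → ℝ) → ℝ) (l : ℝ) :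
    (Fin d → ℝ) → ℝ :=
  fun x => (l ^ d)⁻¹ * ψ fun i => x i / l

/-- Spatial convolution `(f * w)(x) = ∫ w(y) f(x−y) dy`. -/
noncomputable def mollify {d : ℕ} {E : Type*} [NormedAddCommGroup E] [NormedSpace ℝ E]
    (w : (Fin d → ℝ) → ℝ) (f : (Fin d → ℝ) → E) : (Fin d → ℝ) → E :=
  fun x => ∫ y, w y • f (x - y)

/-- The Hölder norm `‖u‖_{C^β} = ‖u‖_{C⁰} + [u]_{C^{0,β}}`. -/
noncomputable def holderCNorm {d : ℕ} {E : Type*} [NormedAddCommGroup E]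
    (s : ℝ) (f : (Fin d → ℝ) → E) : ℝ :=
  sSup {r | ∃ x : Fin d → ℝ, r = ‖f x‖} +
    sSup {r | ∃ x y : Fin d → ℝ, x ≠ y ∧ r = ‖f x - f y‖ / dist x y ^ s}

open scoped Convolution

lemma holder_facts {d : ℕ} {β : ℝ} (hβ0 : 0 < β)
    (u : (Fin d → ℝ) → (Fin d → ℝ)) (hper : ZPer u) (K : NNReal)
    (hK : HolderWith K β.toNNReal u) :
    (∀ x, ‖u x‖ ≤ holderCNorm β u) ∧
      (∀ x y, ‖u x - u y‖ ≤ holderCNorm β u * ‖x - y‖ ^ β) := by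
  have hβc : ((β.toNNReal : ℝ)) = β := Real.coe_toNNReal β hβ0.le
  have hd : ∀ x y, dist (u x) (u y) ≤ (K : ℝ) * dist x y ^ β := by
    intro x y; have := hK.dist_le x y; rwa [hβc] at this
  set S2s := {r | ∃ x y : Fin d → ℝ, x ≠ y ∧ r = ‖u x - u y‖ / dist x y ^ β} with hS2s
  set S1s := {r | ∃ x : Fin d → ℝ, r = ‖u x‖} with hS1s
  have hbdd2 : BddAbove S2s := by
    refine ⟨(K : ℝ), ?_⟩
    rintro r ⟨x, y, hxy, rfl⟩
    have hp : 0 < dist x y ^ β := Real.rpow_pos_of_pos (dist_pos.2 hxy) β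
    rw [div_le_iff₀ hp, ← dist_eq_norm]
    exact hd x y
  have hS2nn : 0 ≤ sSup S2s := by
    apply Real.sSup_nonneg
    rintro r ⟨x, y, hxy, rfl⟩
    positivity
  have hbdd1 : BddAbove S1s := by
    refine ⟨‖u 0‖ + (K : ℝ), ?_⟩
    rintro r ⟨x, rfl⟩
    set y : Fin d → ℝ := fun i => Int.fract (x i) with hy
    have hux : u x = u y := by
      have := hper y (fun i => ⌊x i⌋)
      have hxy : (y + fun i => ((⌊x i⌋ : ℤ) : ℝ)) = x := by
        funext i; simp [hy, Int.fract_add_floor]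
      rw [hxy] at this; exact this
    have hynorm : ‖y‖ ≤ 1 := by
      rw [pi_norm_le_iff_of_nonneg zero_le_one]
      intro i
      rw [Real.norm_eq_abs, abs_le]
      exact ⟨by linarith [Int.fract_nonneg (x i)], (Int.fract_lt_one (x i)).le⟩
    have h1 : ‖u x‖ ≤ ‖u 0‖ + dist (u y) (u 0) := by
      rw [hux]
      have := dist_triangle (u y) (u 0) 0
      simp only [dist_zero_right] at this ⊢
      linarith [this]
    have h2 : dist (u y) (u 0) ≤ (K : ℝ) * dist y 0 ^ β := hd y 0
    have h3 : dist y 0 ^ β ≤ 1 := by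
      apply Real.rpow_le_one dist_nonneg _ hβ0.le
      rwa [dist_zero_right]
    nlinarith [K.coe_nonneg, dist_nonneg (x := y) (y := (0 : Fin d → ℝ)),
      Real.rpow_nonneg (dist_nonneg (x := y) (y := (0 : Fin d → ℝ))) β]
  have hS1nn : 0 ≤ sSup S1s := by
    apply Real.sSup_nonneg; rintro r ⟨x, rfl⟩; positivity
  have h2 : ∀ x y, ‖u x - u y‖ ≤ sSup S2s * ‖x - y‖ ^ β := by
    intro x y
    rcases eq_or_ne x y with rfl | hxy
    · simp only [sub_self, norm_zero]
      positivity
    · have hmem : ‖u x - u y‖ / dist x y ^ β ∈ S2s := ⟨x, y, hxy, rfl⟩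
      have hle := le_csSup hbdd2 hmem
      have hp : 0 < dist x y ^ β := Real.rpow_pos_of_pos (dist_pos.2 hxy) β
      calc ‖u x - u y‖ = ‖u x - u y‖ / dist x y ^ β * dist x y ^ β :=
            (div_mul_cancel₀ _ hp.ne').symm
        _ ≤ sSup S2s * dist x y ^ β := mul_le_mul_of_nonneg_right hle hp.le
        _ = sSup S2s * ‖x - y‖ ^ β := by rw [dist_eq_norm]
  constructor
  · intro x
    have := le_csSup hbdd1 (⟨x, rfl⟩ : ‖u x‖ ∈ S1s)
    unfold holderCNorm
    rw [← hS1s, ← hS2s]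
    linarith
  · intro x y
    unfold holderCNorm
    rw [← hS1s, ← hS2s]
    have := h2 x y
    have hr : (0:ℝ) ≤ ‖x - y‖ ^ β := Real.rpow_nonneg (norm_nonneg _) β
    nlinarith


lemma psi_supp {d : ℕ} {ψ : (Fin d → ℝ) → ℝ} (hψ : IsMollifier ψ)
    {x : Fin d → ℝ} (hx : 1 < ‖x‖) : ψ x = 0 := by
  obtain ⟨i, hi⟩ : ∃ i, 1 < |x i| := by
    by_contra h; push_neg at h
    exact absurd ((pi_norm_le_iff_of_nonneg zero_le_one).2 fun i =>
      (Real.norm_eq_abs (x i)) ▸ h i) (not_le.2 hx)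
  apply hψ.support_ball
  calc (1:ℝ) < |x i| ^ 2 := by nlinarith [abs_nonneg (x i), sq_abs (x i)]
    _ = x i ^ 2 := sq_abs _
    _ ≤ ∑ j, x j ^ 2 := Finset.single_le_sum (fun j _ => sq_nonneg (x j)) (Finset.mem_univ i)

lemma psi_hcs {d : ℕ} {ψ : (Fin d → ℝ) → ℝ} (hψ : IsMollifier ψ) :
    HasCompactSupport ψ :=
  HasCompactSupport.intro (isCompact_closedBall (0 : Fin d → ℝ) 1)
    (fun x hx => psi_supp hψ (by simpa [Metric.mem_closedBall, dist_zero_right, not_le] using hx))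

lemma psi_lip {d : ℕ} {ψ : (Fin d → ℝ) → ℝ} (hψ : IsMollifier ψ) :
    ∃ S : ℝ, 0 ≤ S ∧ ∀ a b : Fin d → ℝ, |ψ a - ψ b| ≤ S * ‖a - b‖ := by
  have h1 : (1 : WithTop ℕ∞) ≤ ((⊤ : ℕ∞) : WithTop ℕ∞) := by exact_mod_cast le_top
  obtain ⟨C, hC⟩ := ((hψ.smooth.continuous_fderiv (by simp))).bounded_above_of_compact_support
      ((psi_hcs hψ).fderiv ℝ)
  refine ⟨max C 0, le_max_right _ _, fun a b => ?_⟩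
  have := convex_univ.norm_image_sub_le_of_norm_fderiv_le (f := ψ) (C := max C 0)
    (fun x _ => (hψ.smooth.differentiable (by simp)).differentiableAt)
    (fun x _ => le_trans (hC x) (le_max_left _ _))
    (Set.mem_univ b) (Set.mem_univ a)
  simpa [Real.norm_eq_abs] using this

section M
variable {d : ℕ} {ψ : (Fin d → ℝ) → ℝ} (hψ : IsMollifier ψ) {ε : ℝ} (hε : 0 < ε)

lemma sm_eq : scaledMollifier ψ ε = fun y => (ε ^ d)⁻¹ * ψ (ε⁻¹ • y) := by
  funext y
  have h : (fun i => y i / ε) = ε⁻¹ • y := funext fun i => by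
    simp [div_eq_inv_mul]
  simp only [scaledMollifier, h]

include hψ in
lemma sm_smooth : ContDiff ℝ (⊤ : ℕ∞) (scaledMollifier ψ ε) := by
  rw [sm_eq]
  exact contDiff_const.mul (hψ.smooth.comp (contDiff_id.const_smul ε⁻¹))

include hψ hε in
lemma sm_nonneg : ∀ y, 0 ≤ scaledMollifier ψ ε y := by
  intro y
  exact mul_nonneg (by positivity) (hψ.nonneg _)

include hψ hε in
lemma sm_supp : ∀ y : Fin d → ℝ, ε < ‖y‖ → scaledMollifier ψ ε y = 0 := by
  intro y hy
  rw [sm_eq]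
  have h1 : (1:ℝ) < ‖ε⁻¹ • y‖ := by
    rw [norm_smul, Real.norm_eq_abs, abs_of_pos (inv_pos.2 hε)]
    rw [lt_inv_mul_iff₀ hε]
    simpa using hy
  simp [psi_supp hψ h1]

include hψ hε in
lemma sm_hcs : HasCompactSupport (scaledMollifier ψ ε) :=
  HasCompactSupport.intro (isCompact_closedBall (0 : Fin d → ℝ) ε)
    (fun y hy => sm_supp hψ hε y
      (by simpa [Metric.mem_closedBall, dist_zero_right, not_le] using hy))

include hψ hε in
lemma sm_int_one : (∫ y, scaledMollifier ψ ε y) = 1 := by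
  rw [sm_eq]
  rw [MeasureTheory.integral_const_mul]
  rw [MeasureTheory.Measure.integral_comp_inv_smul_of_nonneg volume ψ hε.le]
  rw [Module.finrank_fin_fun, smul_eq_mul, hψ.integral_one]
  field_simp

include hψ hε in
lemma sm_lip {S : ℝ} (hlip : ∀ a b : Fin d → ℝ, |ψ a - ψ b| ≤ S * ‖a - b‖) :
    ∀ a b : Fin d → ℝ, |scaledMollifier ψ ε a - scaledMollifier ψ ε b|
      ≤ (ε ^ d)⁻¹ * ε⁻¹ * S * ‖a - b‖ := by
  intro a b
  rw [sm_eq]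
  have h1 : (ε ^ d)⁻¹ * ψ (ε⁻¹ • a) - (ε ^ d)⁻¹ * ψ (ε⁻¹ • b)
      = (ε ^ d)⁻¹ * (ψ (ε⁻¹ • a) - ψ (ε⁻¹ • b)) := by ring
  rw [h1, abs_mul, abs_of_nonneg (by positivity : (0:ℝ) ≤ (ε ^ d)⁻¹)]
  have h2 := hlip (ε⁻¹ • a) (ε⁻¹ • b)
  have h3 : ‖ε⁻¹ • a - ε⁻¹ • b‖ = ε⁻¹ * ‖a - b‖ := by
    rw [← smul_sub, norm_smul, Real.norm_eq_abs, abs_of_pos (inv_pos.2 hε)]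
  calc (ε ^ d)⁻¹ * |ψ (ε⁻¹ • a) - ψ (ε⁻¹ • b)|
      ≤ (ε ^ d)⁻¹ * (S * (ε⁻¹ * ‖a - b‖)) := by
        apply mul_le_mul_of_nonneg_left _ (by positivity)
        rw [← h3]; exact h2
    _ = (ε ^ d)⁻¹ * ε⁻¹ * S * ‖a - b‖ := by ring

end M


section Moll
variable {d : ℕ} {w : (Fin d → ℝ) → ℝ} {ε M L β : ℝ}
  (hwc : Continuous w) (hwcs : HasCompactSupport w)

include hwc hwcs in
lemma integ_aux {g : (Fin d → ℝ) → ℝ} (hg : Continuous g) :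
    Integrable (fun y => w y * g y) volume :=
  (hwc.mul hg).integrable_of_hasCompactSupport (hwcs.mul_right)

include hwc hwcs in
lemma moll_small (hwnn : ∀ y, 0 ≤ w y) (hwint : (∫ y, w y) = 1)
    (hwsupp : ∀ y : Fin d → ℝ, ε < ‖y‖ → w y = 0)
    {g : (Fin d → ℝ) → ℝ} (hg : Continuous g) {c : ℝ} (hc : 0 ≤ c)
    (hgb : ∀ y : Fin d → ℝ, ‖y‖ ≤ ε → |g y| ≤ c) :
    |∫ y, w y * g y| ≤ c := by
  have h1 : ∀ y, |w y * g y| ≤ w y * c := by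
    intro y
    rcases le_or_gt ‖y‖ ε with h | h
    · rw [abs_mul, abs_of_nonneg (hwnn y)]
      exact mul_le_mul_of_nonneg_left (hgb y h) (hwnn y)
    · simp [hwsupp y h]
  calc |∫ y, w y * g y| ≤ ∫ y, |w y * g y| := by
        have h := norm_integral_le_integral_norm (μ := volume) (fun y => w y * g y)
        simp only [Real.norm_eq_abs] at h
        exact h
    _ ≤ ∫ y, w y * c := integral_mono (integ_aux hwc hwcs hg).abs
        ((hwc.integrable_of_hasCompactSupport hwcs).mul_const c) h1
    _ = c := by rw [integral_mul_const, hwint, one_mul]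

include hwc hwcs in
lemma comm_est (hβ0 : 0 < β) (hε : 0 < ε) (hM0 : 0 ≤ M)
    (hwnn : ∀ y, 0 ≤ w y) (hwint : (∫ y, w y) = 1)
    (hwsupp : ∀ y : Fin d → ℝ, ε < ‖y‖ → w y = 0)
    {f g : (Fin d → ℝ) → ℝ} (hf : Continuous f) (hg : Continuous g)
    (hfh : ∀ x y, |f x - f y| ≤ M * ‖x - y‖ ^ β)
    (hgh : ∀ x y, |g x - g y| ≤ M * ‖x - y‖ ^ β) (x : Fin d → ℝ) :
    |mollify w (fun y => f y * g y) x - mollify w f x * mollify w g x|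
      ≤ 2 * (M * ε ^ β) ^ 2 := by
  have hA : (0:ℝ) ≤ M * ε ^ β := by positivity
  set F : (Fin d → ℝ) → ℝ := fun y => f (x - y) - f x with hF
  set G : (Fin d → ℝ) → ℝ := fun y => g (x - y) - g x with hG
  have hFc : Continuous F := (hf.comp (continuous_const.sub continuous_id)).sub continuous_const
  have hGc : Continuous G := (hg.comp (continuous_const.sub continuous_id)).sub continuous_const
  have hFb : ∀ y : Fin d → ℝ, ‖y‖ ≤ ε → |F y| ≤ M * ε ^ β := by
    intro y hy
    calc |f (x - y) - f x| ≤ M * ‖x - y - x‖ ^ β := hfh _ _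
      _ = M * ‖y‖ ^ β := by rw [sub_sub_cancel_left, norm_neg]
      _ ≤ M * ε ^ β := by
          exact mul_le_mul_of_nonneg_left
            (Real.rpow_le_rpow (norm_nonneg _) hy hβ0.le) hM0
  have hGb : ∀ y : Fin d → ℝ, ‖y‖ ≤ ε → |G y| ≤ M * ε ^ β := by
    intro y hy
    calc |g (x - y) - g x| ≤ M * ‖x - y - x‖ ^ β := hgh _ _
      _ = M * ‖y‖ ^ β := by rw [sub_sub_cancel_left, norm_neg]
      _ ≤ M * ε ^ β := by
          exact mul_le_mul_of_nonneg_left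
            (Real.rpow_le_rpow (norm_nonneg _) hy hβ0.le) hM0
  set a := ∫ y, w y * F y with ha
  set b := ∫ y, w y * G y with hb
  have haa : |a| ≤ M * ε ^ β := moll_small hwc hwcs hwnn hwint hwsupp hFc hA hFb
  have hbb : |b| ≤ M * ε ^ β := moll_small hwc hwcs hwnn hwint hwsupp hGc hA hGb
  have habfg : |∫ y, w y * (F y * G y)| ≤ (M * ε ^ β) ^ 2 := by
    have := moll_small hwc hwcs hwnn hwint hwsupp (hFc.mul hGc)
      (c := (M * ε ^ β) ^ 2) (by positivity)
      (fun y hy => by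
        rw [Pi.mul_apply, abs_mul, sq]
        exact mul_le_mul (hFb y hy) (hGb y hy) (abs_nonneg _) hA)
    exact this
  have hwi : Integrable w volume := hwc.integrable_of_hasCompactSupport hwcs
  have hmf : mollify w f x = a + f x := by
    have hpt : (fun y => w y • f (x - y)) = fun y => w y * F y + f x * w y := by
      funext y; simp only [hF, smul_eq_mul]; ring
    rw [mollify, hpt, integral_add (integ_aux hwc hwcs hFc) (hwi.const_mul (f x)),
      integral_const_mul, hwint, ← ha]
    ring
  have hmg : mollify w g x = b + g x := by
    have hpt : (fun y => w y • g (x - y)) = fun y => w y * G y + g x * w y := by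
      funext y; simp only [hG, smul_eq_mul]; ring
    rw [mollify, hpt, integral_add (integ_aux hwc hwcs hGc) (hwi.const_mul (g x)),
      integral_const_mul, hwint, ← hb]
    ring
  have hmfg : mollify w (fun y => f y * g y) x
      = (∫ y, w y * (F y * G y)) + (f x * b + g x * a + f x * g x) := by
    have hpt : (fun y => w y • (f (x - y) * g (x - y)))
        = fun y => w y * (F y * G y)
          + (f x * (w y * G y) + (g x * (w y * F y) + (f x * g x) * w y)) := by
      funext y; simp only [hF, hG, smul_eq_mul]; ring
    have i1 : Integrable (fun y => w y * (F y * G y)) volume := integ_aux hwc hwcs (hFc.mul hGc)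
    have i2 : Integrable (fun y => f x * (w y * G y)) volume :=
      (integ_aux hwc hwcs hGc).const_mul (f x)
    have i3 : Integrable (fun y => g x * (w y * F y)) volume :=
      (integ_aux hwc hwcs hFc).const_mul (g x)
    have i4 : Integrable (fun y => (f x * g x) * w y) volume := hwi.const_mul _
    have i34 : Integrable (fun y => g x * (w y * F y) + (f x * g x) * w y) volume := i3.add i4
    have i234 : Integrable
        (fun y => f x * (w y * G y) + (g x * (w y * F y) + (f x * g x) * w y)) volume :=
      i2.add i34
    rw [mollify, hpt]
    rw [integral_add i1 i234, integral_add i2 i34, integral_add i3 i4,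
      integral_const_mul, integral_const_mul, integral_const_mul, hwint, ← ha, ← hb]
    ring
  have hkey : mollify w (fun y => f y * g y) x - mollify w f x * mollify w g x
      = (∫ y, w y * (F y * G y)) - a * b := by
    rw [hmfg, hmf, hmg]; ring
  rw [hkey]
  calc |(∫ y, w y * (F y * G y)) - a * b|
      ≤ |∫ y, w y * (F y * G y)| + |a * b| := abs_sub _ _
    _ ≤ (M * ε ^ β) ^ 2 + (M * ε ^ β) ^ 2 := by
        refine add_le_add habfg ?_
        rw [abs_mul, sq]
        exact mul_le_mul haa hbb (abs_nonneg _) hA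
    _ = 2 * (M * ε ^ β) ^ 2 := by ring

end Moll

section Grad
variable {d : ℕ} {w : (Fin d → ℝ) → ℝ} {ε M L β : ℝ}
  (hwc : Continuous w) (hwcs : HasCompactSupport w)

lemma integ_aux' {g : (Fin d → ℝ) → ℝ} (hwc : Continuous w) (hwcs : HasCompactSupport w)
    (hg : Continuous g) : Integrable (fun y => w y * g y) volume :=
  (hwc.mul hg).integrable_of_hasCompactSupport (hwcs.mul_right)

include hwc hwcs in
lemma moll_diff_est (hβ0 : 0 < β) (hε : 0 < ε) (hM0 : 0 ≤ M) (hL0 : 0 ≤ L)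
    (hwint : (∫ y, w y) = 1)
    (hwsupp : ∀ y : Fin d → ℝ, ε < ‖y‖ → w y = 0)
    (hwlip : ∀ a b : Fin d → ℝ, |w a - w b| ≤ L * ‖a - b‖)
    {f : (Fin d → ℝ) → ℝ} (hf : Continuous f)
    (hfh : ∀ x y, |f x - f y| ≤ M * ‖x - y‖ ^ β)
    (x v : Fin d → ℝ) (hv : ‖v‖ ≤ ε) :
    |mollify w f (x + v) - mollify w f x|
      ≤ L * (M * (2 * ε) ^ β) * (2 * (2 * ε)) ^ d * ‖v‖ := by
  set w' : (Fin d → ℝ) → ℝ := fun y => w (y + v) with hw'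
  have hw'c : Continuous w' := hwc.comp (continuous_id.add continuous_const)
  have hw'cs : HasCompactSupport w' :=
    hwcs.comp_homeomorph (Homeomorph.addRight v)
  have hfc' : Continuous fun y : Fin d → ℝ => f (x - y) :=
    hf.comp (continuous_const.sub continuous_id)
  have h1 : mollify w f (x + v) = ∫ y, w' y * f (x - y) := by
    rw [mollify, ← MeasureTheory.integral_add_right_eq_self
      (μ := volume) (fun y => w y • f (x + v - y)) v]
    congr 1
    funext y
    have hxy : x + v - (y + v) = x - y := by abel
    simp only [hw', hxy, smul_eq_mul]
  have h0 : (∫ y, w' y) = 1 := by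
    rw [hw', MeasureTheory.integral_add_right_eq_self (μ := volume) w v, hwint]
  have hw'i : Integrable w' volume := hw'c.integrable_of_hasCompactSupport hw'cs
  have hwi : Integrable w volume := hwc.integrable_of_hasCompactSupport hwcs
  have h2 : mollify w f (x + v) - mollify w f x
      = ∫ y, (w' y - w y) * (f (x - y) - f x) := by
    have i1 : Integrable (fun y => w' y * f (x - y)) volume := integ_aux' hw'c hw'cs hfc'
    have i2 : Integrable (fun y => w y * f (x - y)) volume := integ_aux' hwc hwcs hfc'
    have i3 : Integrable (fun y => w' y * f x) volume := hw'i.mul_const _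
    have i4 : Integrable (fun y => w y * f x) volume := hwi.mul_const _
    have i12 : Integrable (fun y => w' y * f (x - y) - w y * f (x - y)) volume := i1.sub i2
    have i34 : Integrable (fun y => w' y * f x - w y * f x) volume := i3.sub i4
    have hpt : (fun y => (w' y - w y) * (f (x - y) - f x))
        = fun y => (w' y * f (x - y) - w y * f (x - y)) - (w' y * f x - w y * f x) := by
      funext y; ring
    rw [hpt, integral_sub i12 i34, integral_sub i1 i2, integral_sub i3 i4,
      integral_mul_const, integral_mul_const, h0, hwint, h1, mollify]
    simp only [smul_eq_mul]
    ring
  rw [h2]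
  set B := Metric.closedBall (0 : Fin d → ℝ) (2 * ε) with hB
  have hzero : ∀ y ∉ B, (w' y - w y) * (f (x - y) - f x) = 0 := by
    intro y hy
    have hny : 2 * ε < ‖y‖ := by
      simpa [hB, Metric.mem_closedBall, dist_zero_right, not_le] using hy
    have hz1 : w y = 0 := hwsupp y (by linarith)
    have hz2 : w' y = 0 := by
      apply hwsupp
      have htr := norm_sub_le (y + v) v
      have h3 : y + v - v = y := by abel
      rw [h3] at htr
      by_contra hcon
      push_neg at hcon
      linarith
    simp [hz1, hz2]
  rw [← MeasureTheory.setIntegral_eq_integral_of_forall_compl_eq_zero hzero]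
  have hvol : volume B < ⊤ := by
    rw [hB, Real.volume_pi_closedBall 0 (by positivity)]
    exact ENNReal.ofReal_lt_top
  have hbd : ∀ y ∈ B, ‖(w' y - w y) * (f (x - y) - f x)‖ ≤ (L * ‖v‖) * (M * (2 * ε) ^ β) := by
    intro y hy
    have hny : ‖y‖ ≤ 2 * ε := by
      simpa [hB, Metric.mem_closedBall, dist_zero_right] using hy
    rw [Real.norm_eq_abs, abs_mul]
    have e1 : |w' y - w y| ≤ L * ‖v‖ := by
      have := hwlip (y + v) y
      rwa [add_sub_cancel_left] at this
    have e2 : |f (x - y) - f x| ≤ M * (2 * ε) ^ β := by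
      calc |f (x - y) - f x| ≤ M * ‖x - y - x‖ ^ β := hfh _ _
        _ = M * ‖y‖ ^ β := by rw [sub_sub_cancel_left, norm_neg]
        _ ≤ M * (2 * ε) ^ β := mul_le_mul_of_nonneg_left
            (Real.rpow_le_rpow (norm_nonneg _) hny hβ0.le) hM0
    exact mul_le_mul e1 e2 (abs_nonneg _) (by positivity)
  have hmeas : AEStronglyMeasurable (fun y => (w' y - w y) * (f (x - y) - f x))
      (volume.restrict B) :=
    (((hw'c.sub hwc).mul (hfc'.sub continuous_const))).aestronglyMeasurable.restrict
  have hle := norm_setIntegral_le_of_norm_le_const (μ := volume) hvol hbd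
  rw [Real.norm_eq_abs] at hle
  calc |∫ y in B, (w' y - w y) * (f (x - y) - f x)|
      ≤ (L * ‖v‖) * (M * (2 * ε) ^ β) * (volume B).toReal := hle
    _ = (L * ‖v‖) * (M * (2 * ε) ^ β) * (2 * (2 * ε)) ^ d := by
        rw [hB, Real.volume_pi_closedBall 0 (by positivity),
          ENNReal.toReal_ofReal (by positivity), Fintype.card_fin]
    _ = L * (M * (2 * ε) ^ β) * (2 * (2 * ε)) ^ d * ‖v‖ := by ring

include hwc hwcs in
lemma moll_grad_est (hβ0 : 0 < β) (hε : 0 < ε) (hM0 : 0 ≤ M) (hL0 : 0 ≤ L)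
    (hwsm : ContDiff ℝ (⊤ : ℕ∞) w)
    (hwint : (∫ y, w y) = 1)
    (hwsupp : ∀ y : Fin d → ℝ, ε < ‖y‖ → w y = 0)
    (hwlip : ∀ a b : Fin d → ℝ, |w a - w b| ≤ L * ‖a - b‖)
    {f : (Fin d → ℝ) → ℝ} (hf : Continuous f)
    (hfh : ∀ x y, |f x - f y| ≤ M * ‖x - y‖ ^ β) (x : Fin d → ℝ) :
    ‖fderiv ℝ (mollify w f) x‖ ≤ L * (M * (2 * ε) ^ β) * (2 * (2 * ε)) ^ d := by
  have hconv : mollify w f = w ⋆[ContinuousLinearMap.lsmul ℝ ℝ, volume] f := by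
    funext z
    simp [mollify, convolution_def]
  have h1 : (1 : WithTop ℕ∞) ≤ ((⊤ : ℕ∞) : WithTop ℕ∞) := by exact_mod_cast le_top
  have h1' : ((1 : ℕ∞) : WithTop ℕ∞) ≤ ((⊤ : ℕ∞) : WithTop ℕ∞) := by exact_mod_cast le_top
  have hwsm1 : ContDiff ℝ ((1 : ℕ∞) : WithTop ℕ∞) w := hwsm.of_le h1'
  have hsm : ContDiff ℝ ((1 : ℕ∞) : WithTop ℕ∞) (mollify w f) := by
    rw [hconv]
    exact hwcs.contDiff_convolution_left _ hwsm1 hf.locallyIntegrable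
  have hdiff : HasFDerivAt (mollify w f) (fderiv ℝ (mollify w f) x) x :=
    (hsm.differentiable (by simp) x).hasFDerivAt
  apply hdiff.le_of_lip' (by positivity)
  filter_upwards [Metric.ball_mem_nhds x hε] with x' hx'
  have hv : ‖x' - x‖ ≤ ε := by
    rw [← dist_eq_norm]
    exact (Metric.mem_ball.1 hx').le
  have := moll_diff_est hwc hwcs hβ0 hε hM0 hL0 hwint hwsupp hwlip hf hfh x (x' - x) hv
  rw [add_sub_cancel] at this
  simpa [Real.norm_eq_abs] using this

end Grad
section Cont
open scoped Convolution
variable {d : ℕ} {w : (Fin d → ℝ) → ℝ}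

lemma moll_conv_eq (hwcs : HasCompactSupport w) {f : (Fin d → ℝ) → ℝ} :
    mollify w f = w ⋆[ContinuousLinearMap.lsmul ℝ ℝ, volume] f := by
  funext z
  simp [mollify, convolution_def]

lemma moll_cont (hwc : Continuous w) (hwcs : HasCompactSupport w)
    {f : (Fin d → ℝ) → ℝ} (hf : Continuous f) : Continuous (mollify w f) := by
  rw [moll_conv_eq hwcs]
  exact hwcs.continuous_convolution_left _ hwc hf.locallyIntegrable

lemma moll_fderiv_cont (hwcs : HasCompactSupport w)
    (hwsm : ContDiff ℝ (⊤ : ℕ∞) w)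
    {f : (Fin d → ℝ) → ℝ} (hf : Continuous f) :
    Continuous (fun x => fderiv ℝ (mollify w f) x) := by
  have h1' : ((1 : ℕ∞) : WithTop ℕ∞) ≤ ((⊤ : ℕ∞) : WithTop ℕ∞) := by exact_mod_cast le_top
  have hsm : ContDiff ℝ ((1 : ℕ∞) : WithTop ℕ∞) (mollify w f) := by
    rw [moll_conv_eq hwcs]
    exact hwcs.contDiff_convolution_left _ (hwsm.of_le h1') hf.locallyIntegrable
  exact hsm.continuous_fderiv (by simp)

end Cont


/-- **Constantin–E–Titi commutator flux estimate.**
For `u ∈ C^β(𝕋^d; ℝ^d)` and `ε ∈ (0,1]`,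
`|∫_{𝕋^d} ⟨(u⊗u)*ψ_ε − u^ε⊗u^ε, ∇u^ε⟩ dx| ≤ C(d,β,ψ) ε^{3β−1} ‖u‖_{C^β}³`. -/
theorem commutator_energy_flux_estimate (d : ℕ) (hd : 2 ≤ d) (β : ℝ)
    (hβ0 : 0 < β) (hβ1 : β < 1)
    (ψ : (Fin d → ℝ) → ℝ) (hψ : IsMollifier ψ) :
    ∃ Cc : ℝ, 0 < Cc ∧
      ∀ u : (Fin d → ℝ) → (Fin d → ℝ), ZPer u →
        (∃ K : NNReal, HolderWith K β.toNNReal u) →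
        ∀ ε : ℝ, 0 < ε → ε ≤ 1 →
          |∫ x in cube d, ∑ i, ∑ j,
              (mollify (scaledMollifier ψ ε) (fun y => u y i * u y j) x
                - mollify (scaledMollifier ψ ε) (fun y => u y i) x
                  * mollify (scaledMollifier ψ ε) (fun y => u y j) x)
              * fderiv ℝ (fun y => mollify (scaledMollifier ψ ε) (fun z => u z i) y)
                  x (Pi.single j 1)|
            ≤ Cc * ε ^ (3 * β - 1) * holderCNorm β u ^ 3 := by
  obtain ⟨S, hS0, hSlip⟩ := psi_lip hψ
  refine ⟨(d : ℝ) ^ 2 * (2 * S * 2 ^ β * 4 ^ d) + 1, by positivity, ?_⟩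
  intro u hper hKex ε hε hε1
  obtain ⟨K, hK⟩ := hKex
  obtain ⟨hub, huh⟩ := holder_facts hβ0 u hper K hK
  set M := holderCNorm β u with hMdef
  have hM0 : 0 ≤ M := le_trans (norm_nonneg _) (hub 0)
  have hu_cont : Continuous u := hK.continuous (Real.toNNReal_pos.2 hβ0)
  set w := scaledMollifier ψ ε with hwdef
  have hwc : Continuous w := (sm_smooth hψ).continuous
  have hwcs : HasCompactSupport w := sm_hcs hψ hε
  have hwnn : ∀ y, 0 ≤ w y := sm_nonneg hψ hε
  have hwsupp : ∀ y : Fin d → ℝ, ε < ‖y‖ → w y = 0 := sm_supp hψ hε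
  have hwint : (∫ y, w y) = 1 := sm_int_one hψ hε
  have hwsm : ContDiff ℝ (⊤ : ℕ∞) w := sm_smooth hψ
  have hwlip : ∀ a b : Fin d → ℝ, |w a - w b| ≤ (ε ^ d)⁻¹ * ε⁻¹ * S * ‖a - b‖ :=
    sm_lip hψ hε hSlip
  have hfc : ∀ i : Fin d, Continuous (fun y => u y i) :=
    fun i => (continuous_apply i).comp hu_cont
  have hfh : ∀ (i : Fin d) (x y : Fin d → ℝ),
      |u x i - u y i| ≤ M * ‖x - y‖ ^ β := by
    intro i x y
    have h1 : |u x i - u y i| ≤ ‖u x - u y‖ := by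
      simpa [Pi.sub_apply] using norm_le_pi_norm (u x - u y) i
    exact le_trans h1 (huh x y)
  set L : ℝ := (ε ^ d)⁻¹ * ε⁻¹ * S with hLdef
  have hL0 : 0 ≤ L := by positivity
  set P : ℝ := 2 * (M * ε ^ β) ^ 2 * (L * (M * (2 * ε) ^ β) * (2 * (2 * ε)) ^ d) with hPdef
  have hP0 : 0 ≤ P := by positivity
  -- pointwise bound on each summand
  have hterm : ∀ (i j : Fin d) (x : Fin d → ℝ),
      |(mollify w (fun y => u y i * u y j) x
          - mollify w (fun y => u y i) x * mollify w (fun y => u y j) x)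
        * fderiv ℝ (fun y => mollify w (fun z => u z i) y) x (Pi.single j 1)| ≤ P := by
    intro i j x
    rw [abs_mul]
    have hc := comm_est hwc hwcs hβ0 hε hM0 hwnn hwint hwsupp (hfc i) (hfc j)
      (hfh i) (hfh j) x
    have hg := moll_grad_est hwc hwcs hβ0 hε hM0 hL0 hwsm hwint hwsupp hwlip
      (hfc i) (hfh i) x
    have hD : |fderiv ℝ (fun y => mollify w (fun z => u z i) y) x (Pi.single j 1)|
        ≤ L * (M * (2 * ε) ^ β) * (2 * (2 * ε)) ^ d := by
      have h1 := (fderiv ℝ (mollify w (fun z => u z i)) x).le_opNorm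
        (Pi.single j 1 : Fin d → ℝ)
      rw [Pi.norm_single, norm_one, mul_one, Real.norm_eq_abs] at h1
      exact le_trans h1 hg
    rw [hPdef]
    exact mul_le_mul hc hD (abs_nonneg _) (by positivity)
  have hpoint : ∀ x : Fin d → ℝ,
      |∑ i, ∑ j,
        (mollify w (fun y => u y i * u y j) x
          - mollify w (fun y => u y i) x * mollify w (fun y => u y j) x)
        * fderiv ℝ (fun y => mollify w (fun z => u z i) y) x (Pi.single j 1)|
      ≤ (d : ℝ) ^ 2 * P := by
    intro x
    calc |∑ i, ∑ j, _| ≤ ∑ i, |∑ j,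
          (mollify w (fun y => u y i * u y j) x
            - mollify w (fun y => u y i) x * mollify w (fun y => u y j) x)
          * fderiv ℝ (fun y => mollify w (fun z => u z i) y) x (Pi.single j 1)| :=
        Finset.abs_sum_le_sum_abs _ _
      _ ≤ ∑ _i : Fin d, ∑ _j : Fin d, P := by
          refine Finset.sum_le_sum fun i _ => ?_
          refine le_trans (Finset.abs_sum_le_sum_abs _ _) ?_
          exact Finset.sum_le_sum fun j _ => hterm i j x
      _ = (d : ℝ) ^ 2 * P := by
          simp [Finset.sum_const, Fintype.card_fin, nsmul_eq_mul]; ring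
  -- integrate over the unit cube
  have hmeasv : volume (cube d) = 1 := by
    rw [cube, volume_pi_pi]
    simp [Real.volume_Ico]
  have hcont : Continuous (fun x : Fin d → ℝ => ∑ i, ∑ j,
      (mollify w (fun y => u y i * u y j) x
        - mollify w (fun y => u y i) x * mollify w (fun y => u y j) x)
      * fderiv ℝ (fun y => mollify w (fun z => u z i) y) x (Pi.single j 1)) := by
    refine continuous_finset_sum _ fun i _ => continuous_finset_sum _ fun j _ => ?_
    exact ((moll_cont hwc hwcs ((hfc i).mul (hfc j))).sub
        ((moll_cont hwc hwcs (hfc i)).mul (moll_cont hwc hwcs (hfc j)))).mul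
      ((moll_fderiv_cont hwcs hwsm (hfc i)).clm_apply continuous_const)
  have hint := norm_setIntegral_le_of_norm_le_const (μ := volume) (s := cube d)
    (C := (d : ℝ) ^ 2 * P)
    (by rw [hmeasv]; exact ENNReal.one_lt_top)
    (fun x _ => by rw [Real.norm_eq_abs]; exact hpoint x)
  rw [Real.norm_eq_abs, Measure.real, hmeasv, ENNReal.toReal_one, mul_one] at hint
  -- simplify the constant
  have hεne : ε ≠ 0 := hε.ne'
  have hqne : (ε : ℝ) ^ d ≠ 0 := pow_ne_zero d hεne
  have h3 : ε ^ (3 * β - 1) = (ε ^ β) ^ (3 : ℕ) * ε⁻¹ := by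
    rw [Real.rpow_sub hε, Real.rpow_one, show (3 : ℝ) * β = β * 3 by ring,
      Real.rpow_mul hε.le, show ((3 : ℝ)) = ((3 : ℕ) : ℝ) by norm_num,
      Real.rpow_natCast, div_eq_mul_inv]
  have hPeq : P = (2 * S * 2 ^ β * 4 ^ d) * (ε ^ (3 * β - 1) * M ^ 3) := by
    rw [hPdef, hLdef, h3,
      show ((2 : ℝ) * ε) ^ β = 2 ^ β * ε ^ β from Real.mul_rpow (by norm_num) hε.le,
      show ((2 : ℝ) * (2 * ε)) ^ d = 4 ^ d * ε ^ d by rw [show (2:ℝ)*(2*ε) = 4*ε by ring, mul_pow]]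
    field_simp
  have hnn : 0 ≤ ε ^ (3 * β - 1) * M ^ 3 := by positivity
  calc |∫ x in cube d, ∑ i, ∑ j,
        (mollify w (fun y => u y i * u y j) x
          - mollify w (fun y => u y i) x * mollify w (fun y => u y j) x)
        * fderiv ℝ (fun y => mollify w (fun z => u z i) y) x (Pi.single j 1)|
      ≤ (d : ℝ) ^ 2 * P := hint
    _ = ((d : ℝ) ^ 2 * (2 * S * 2 ^ β * 4 ^ d)) * (ε ^ (3 * β - 1) * M ^ 3) := by
        rw [hPeq]; ring
    _ ≤ ((d : ℝ) ^ 2 * (2 * S * 2 ^ β * 4 ^ d) + 1) * (ε ^ (3 * β - 1) * M ^ 3) := by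
        nlinarith [hnn]
    _ = ((d : ℝ) ^ 2 * (2 * S * 2 ^ β * 4 ^ d) + 1) * ε ^ (3 * β - 1) * M ^ 3 := by
        ring
end

section
/- (Parameter comparison: double-skipping iteration.) Let β ∈ (0, 1/2) and b > 1 satisfy β(b+1) < 1, and let 0 < σ < (b−1)(1 − β(b+1))/b. Then there exists α₀ = α₀(β, b, σ) > 0 such that for every α ∈ (0, α₀] and every c > 0 there exists a₀ with the following property: for all a ≥ a₀ and all integers q ≥ 1, λ_{q−1}^{1+20α} δ_{q−1}^{1/2} ≤ c · ε_q · λ_q^{1−20α} · δ_{q+1}^{1/2}. -/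
set_option maxHeartbeats 1000000


/-- The frequency parameter `λ_q = ⌈a^(b^q)⌉`. -/
noncomputable def lam (a b : ℝ) (q : ℤ) : ℝ := (⌈a ^ (b ^ q)⌉₊ : ℝ)

/-- The stress amplitude `δ_q = λ_q^{−2β}`. -/
noncomputable def del (a b β : ℝ) (q : ℤ) : ℝ := lam a b q ^ (-(2 * β))

/-- The gluing parameter `ε_q = λ_q^{−σ}`. -/
noncomputable def eps (a b σ : ℝ) (q : ℤ) : ℝ := lam a b q ^ (-σ)

lemma one_le_apow {a b : ℝ} (ha : 1 ≤ a) (hb : 0 < b) (q : ℤ) :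
    1 ≤ a ^ (b ^ q : ℝ) := by
  rw [show (1:ℝ) = a ^ (0:ℝ) from (Real.rpow_zero a).symm]
  exact Real.rpow_le_rpow_of_exponent_le ha (le_of_lt (zpow_pos hb q))

lemma one_le_lam {a b : ℝ} (ha : 1 ≤ a) (hb : 0 < b) (q : ℤ) :
    1 ≤ lam a b q :=
  le_trans (one_le_apow ha hb q) (Nat.le_ceil _)

lemma apow_le_lam (a b : ℝ) (q : ℤ) : a ^ (b ^ q : ℝ) ≤ lam a b q :=
  Nat.le_ceil _

lemma lam_le_two_apow {a b : ℝ} (ha : 1 ≤ a) (hb : 0 < b) (q : ℤ) :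
    lam a b q ≤ 2 * a ^ (b ^ q : ℝ) := by
  have h1 := one_le_apow ha hb q
  have h2 := Nat.ceil_lt_add_one (R := ℝ) (a := a ^ (b ^ q : ℝ)) (by linarith)
  unfold lam
  linarith

/-- **Parameter comparison: double-skipping iteration.**
For `β ∈ (0,1/2)`, `b > 1` with `β(b+1) < 1`, and `0 < σ < (b−1)(1−β(b+1))/b`,
there is `α₀ > 0` such that for all `α ∈ (0, α₀]` and `c > 0`, for `a`
sufficiently large and all integers `q ≥ 1`,
`λ_{q−1}^{1+20α} δ_{q−1}^{1/2} ≤ c · ε_q λ_q^{1−20α} δ_{q+1}^{1/2}`. -/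
theorem param_double_skipping (β b σ : ℝ)
    (hβ0 : 0 < β) (hβ : β < 1 / 2) (hb : 1 < b)
    (hβb : β * (b + 1) < 1)
    (hσ0 : 0 < σ) (hσ : σ < (b - 1) * (1 - β * (b + 1)) / b) :
    ∃ α₀ : ℝ, 0 < α₀ ∧ ∀ α : ℝ, 0 < α → α ≤ α₀ → ∀ c : ℝ, 0 < c →
      ∃ a₀ : ℝ, ∀ a : ℝ, a₀ ≤ a → ∀ q : ℤ, 1 ≤ q →
        lam a b (q - 1) ^ (1 + 20 * α) * del a b β (q - 1) ^ ((1 : ℝ) / 2) ≤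
          c * eps a b σ q * lam a b q ^ (1 - 20 * α) * del a b β (q + 1) ^ ((1 : ℝ) / 2) := by
  have hb0 : (0:ℝ) < b := by linarith
  have hbne : b ≠ 0 := ne_of_gt hb0
  set g : ℝ := b * (1 - σ) - b ^ 2 * β - 1 + β with hg_def
  have hσb : σ * b < (b - 1) * (1 - β * (b + 1)) := by
    have := (lt_div_iff₀ hb0).mp hσ
    linarith
  have hgpos : 0 < g := by nlinarith
  have hσ1 : σ < 1 := by nlinarith
  refine ⟨min (g / (40 * (b + 1))) (min ((1 - σ) / 40) (1 / 40)),
    lt_min (by positivity) (lt_min (by linarith) (by norm_num)), ?_⟩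
  intro α hα0 hα1 c hc
  have hα_g : 20 * α * (b + 1) ≤ g / 2 := by
    have h1 : α ≤ g / (40 * (b + 1)) := le_trans hα1 (min_le_left _ _)
    have hb1 : (0:ℝ) < b + 1 := by linarith
    rw [le_div_iff₀ (by positivity)] at h1
    nlinarith
  have hα_σ : 20 * α ≤ (1 - σ) / 2 := by
    have h1 : α ≤ (1 - σ) / 40 := le_trans hα1 (le_trans (min_le_right _ _) (min_le_left _ _))
    linarith
  have hα_small : 20 * α ≤ 1 / 2 := by
    have h1 : α ≤ 1 / 40 := le_trans hα1 (le_trans (min_le_right _ _) (min_le_right _ _))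
    linarith
  refine ⟨max 2 ((8 / c) ^ ((2:ℝ) / g)), ?_⟩
  intro a ha q hq
  have ha2 : (2:ℝ) ≤ a := le_trans (le_max_left _ _) ha
  have ha1 : (1:ℝ) ≤ a := by linarith
  have ha0 : (0:ℝ) < a := by linarith
  -- exponents
  set t : ℝ := b ^ (q - 1) with ht_def
  have ht1 : (1:ℝ) ≤ t := one_le_zpow₀ (le_of_lt hb) (by linarith)
  have ht0 : (0:ℝ) < t := by linarith
  have hbq : (b:ℝ) ^ q = t * b := by
    rw [ht_def, ← zpow_add_one₀ hbne, sub_add_cancel]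
  have hbq1 : (b:ℝ) ^ (q + 1) = t * b ^ 2 := by
    rw [zpow_add_one₀ hbne, hbq]
    ring
  set e1 : ℝ := 1 + 20 * α - β with he1_def
  have he1_0 : 0 ≤ e1 := by rw [he1_def]; linarith
  have he1_2 : e1 ≤ 2 := by rw [he1_def]; linarith
  set m : ℝ := 1 - σ - 20 * α with hm_def
  have hm0 : 0 ≤ m := by rw [hm_def]; linarith
  set E : ℝ := b * m - b ^ 2 * β - e1 with hE_def
  have hE : g / 2 ≤ E := by rw [hE_def, hm_def, he1_def]; nlinarith
  have hE0 : 0 ≤ E := by linarith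
  -- lam bounds
  set L0 : ℝ := lam a b (q - 1) with hL0_def
  set L1 : ℝ := lam a b q with hL1_def
  set L2 : ℝ := lam a b (q + 1) with hL2_def
  have hL0 : 1 ≤ L0 := one_le_lam ha1 hb0 _
  have hL1 : 1 ≤ L1 := one_le_lam ha1 hb0 _
  have hL2 : 1 ≤ L2 := one_le_lam ha1 hb0 _
  have hL0pos : (0:ℝ) < L0 := by linarith
  have hL1pos : (0:ℝ) < L1 := by linarith
  have hL2pos : (0:ℝ) < L2 := by linarith
  -- unfold del, eps and combine powers
  simp only [del, eps, ← hL0_def, ← hL1_def, ← hL2_def]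
  have hpow : ∀ L : ℝ, 0 < L → (L ^ (-(2*β))) ^ ((1:ℝ)/2) = L ^ (-β) := by
    intro L hL
    rw [← Real.rpow_mul hL.le]
    congr 1
    ring
  rw [hpow L0 hL0pos, hpow L2 hL2pos]
  have hLHS : L0 ^ (1 + 20*α) * L0 ^ (-β) = L0 ^ e1 := by
    rw [← Real.rpow_add hL0pos, he1_def]
    ring_nf
  have hRHS : c * L1 ^ (-σ) * L1 ^ (1 - 20*α) = c * L1 ^ m := by
    rw [mul_assoc, ← Real.rpow_add hL1pos, hm_def]
    ring_nf
  rw [hLHS, hRHS]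
  -- key bounds in terms of powers of a
  have h1 : L0 ^ e1 ≤ 4 * a ^ (t * e1) := by
    have hle : L0 ≤ 2 * a ^ t := lam_le_two_apow ha1 hb0 (q - 1)
    have h24 : (2:ℝ) ^ e1 ≤ 4 := by
      calc (2:ℝ) ^ e1 ≤ 2 ^ (2:ℝ) := Real.rpow_le_rpow_of_exponent_le one_le_two he1_2
        _ = 4 := by
          rw [show (2:ℝ) = ((2:ℕ):ℝ) by norm_num, Real.rpow_natCast]
          norm_num
    calc L0 ^ e1 ≤ (2 * a ^ t) ^ e1 := Real.rpow_le_rpow hL0pos.le hle he1_0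
      _ = 2 ^ e1 * (a ^ t) ^ e1 := Real.mul_rpow (by norm_num) (by positivity)
      _ = 2 ^ e1 * a ^ (t * e1) := by rw [← Real.rpow_mul ha0.le]
      _ ≤ 4 * a ^ (t * e1) :=
          mul_le_mul_of_nonneg_right h24 (Real.rpow_nonneg ha0.le _)
  have h2 : a ^ (t * b * m) ≤ L1 ^ m := by
    have hle : a ^ (t * b) ≤ L1 := by
      rw [hL1_def, ← hbq]; exact apow_le_lam a b q
    calc a ^ (t * b * m) = (a ^ (t * b)) ^ m := Real.rpow_mul ha0.le _ _
      _ ≤ L1 ^ m := Real.rpow_le_rpow (by positivity) hle hm0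
  have h3 : (1/2 : ℝ) * a ^ (-(t * b ^ 2 * β)) ≤ L2 ^ (-β) := by
    have hle : L2 ≤ 2 * a ^ (t * b ^ 2) := by
      rw [hL2_def, ← hbq1]; exact lam_le_two_apow ha1 hb0 (q + 1)
    have step : (2 * a ^ (t * b ^ 2)) ^ (-β) ≤ L2 ^ (-β) :=
      Real.rpow_le_rpow_of_nonpos hL2pos hle (by linarith)
    have hval : (2 * a ^ (t * b ^ 2)) ^ (-β)
        = 2 ^ (-β) * a ^ (-(t * b ^ 2 * β)) := by
      rw [Real.mul_rpow (by norm_num) (by positivity), ← Real.rpow_mul ha0.le]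
      congr 1
      ring
    have h2b : (1/2 : ℝ) ≤ 2 ^ (-β) := by
      have : (2:ℝ) ^ (-(1:ℝ)) ≤ 2 ^ (-β) :=
        Real.rpow_le_rpow_of_exponent_le one_le_two (by linarith)
      rwa [Real.rpow_neg_one, show ((2:ℝ))⁻¹ = 1/2 by norm_num] at this
    calc (1/2 : ℝ) * a ^ (-(t * b ^ 2 * β))
        ≤ 2 ^ (-β) * a ^ (-(t * b ^ 2 * β)) :=
          mul_le_mul_of_nonneg_right h2b (Real.rpow_nonneg ha0.le _)
      _ = (2 * a ^ (t * b ^ 2)) ^ (-β) := hval.symm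
      _ ≤ L2 ^ (-β) := step
  -- the crucial size bound from a large
  have h4c : (4:ℝ) ≤ (c/2) * a ^ (E * t) := by
    have hEt : g / 2 ≤ E * t := by nlinarith
    have hma : (8 / c) ^ ((2:ℝ)/g) ≤ a := le_trans (le_max_right _ _) ha
    have h8c : (0:ℝ) ≤ 8 / c := by positivity
    have ha_g : 8 / c ≤ a ^ (g/2) := by
      calc (8:ℝ)/c = ((8/c) ^ ((2:ℝ)/g)) ^ (g/2) := by
            rw [← Real.rpow_mul h8c, show (2:ℝ)/g * (g/2) = 1 by
              field_simp, Real.rpow_one]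
        _ ≤ a ^ (g/2) := Real.rpow_le_rpow (by positivity) hma (by positivity)
    have ha_E : a ^ (g/2) ≤ a ^ (E * t) := Real.rpow_le_rpow_of_exponent_le ha1 hEt
    have : 8 / c ≤ a ^ (E * t) := le_trans ha_g ha_E
    have hfin : (c/2) * (8/c) ≤ (c/2) * a ^ (E * t) :=
      mul_le_mul_of_nonneg_left this (by positivity)
    have : (c/2) * (8/c) = 4 := by field_simp; ring
    linarith
  -- assemble
  have hmid : a ^ (E * t) * a ^ (t * e1) = a ^ (t * b * m) * a ^ (-(t * b ^ 2 * β)) := by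
    rw [← Real.rpow_add ha0, ← Real.rpow_add ha0]
    congr 1
    rw [hE_def]
    ring
  calc L0 ^ e1 ≤ 4 * a ^ (t * e1) := h1
    _ ≤ ((c/2) * a ^ (E * t)) * a ^ (t * e1) :=
        mul_le_mul_of_nonneg_right h4c (Real.rpow_nonneg ha0.le _)
    _ = (c/2) * (a ^ (t * b * m) * a ^ (-(t * b ^ 2 * β))) := by
        rw [mul_assoc, hmid]
    _ = (c * a ^ (t * b * m)) * ((1/2) * a ^ (-(t * b ^ 2 * β))) := by ring
    _ ≤ (c * L1 ^ m) * (L2 ^ (-β)) := by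
        apply mul_le_mul
        · exact mul_le_mul_of_nonneg_left h2 hc.le
        · exact h3
        · positivity
        · positivity
end
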